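/- Let α ∈ (0,1) and T > 0. There exists a constant C > 0, depending only on α, with the following property: for every real Banach space 𝓗, every w_0 ∈ 𝓗, and every measurable v : (0,T) → 𝓗 with M² := sup_{t ∈ [0,T]} ∫_0^t (t−s)^{α−1} ‖v(s)‖² ds < ∞, the function w(t) = w_0 + (1/Γ(α)) ∫_0^t (t−s)^{α−1} v(s) ds satisfies, for all t_1, t_2 ∈ [0,T], ‖w(t_2) − w(t_1)‖ ≤ C |t_2 − t_1|^{α/2} M. In particular, w is (α/2)-Hölder continuous on [0,T]. -/

import Mathlib

universe u

open MeasureTheory Set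
open scoped ENNReal

/-!
For `t₁ ≤ t₂`, `w t₂ - w t₁` is `Γ(α)⁻¹` times the integral over `(t₁, t₂]` of the weight
`(t₂ - s)^(α-1)` against `v`, minus the integral over `(0, t₁]` of the nonnegative weight
`(t₁ - s)^(α-1) - (t₂ - s)^(α-1)`. Each weight `g` is dominated on its interval by the kernel `k`
of the `L²_α` norm, and has total mass at most `(t₂ - t₁)^α / α`. The weighted Cauchy–Schwarz
inequality `∫ g ‖v‖ ≤ (∫ g)^(1/2) (∫ g ‖v‖²)^(1/2) ≤ (∫ g)^(1/2) (∫ k ‖v‖²)^(1/2)` therefore bounds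
each piece by `((t₂ - t₁)^α / α)^(1/2) M`.
-/

theorem ENNReal.lintegral_mul_le_sqrt_mul_sqrt {X : Type*} [MeasurableSpace X] (μ : Measure X)
    {g f : X → ℝ≥0∞} (hg : AEMeasurable g μ) (hf : AEMeasurable f μ) :
    ∫⁻ x, g x * f x ∂μ ≤ (∫⁻ x, g x ∂μ) ^ (1 / 2 : ℝ) * (∫⁻ x, g x * f x ^ 2 ∂μ) ^ (1 / 2 : ℝ) := by
  have hsq : ∀ a : ℝ≥0∞, (a ^ (1 / 2 : ℝ)) ^ 2 = a := fun a => by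
    rw [← ENNReal.rpow_natCast, ← ENNReal.rpow_mul]; norm_num
  have h := ENNReal.lintegral_mul_le_Lp_mul_Lq μ Real.HolderConjugate.two_two
    (hg.pow_const (1 / 2 : ℝ)) ((hg.pow_const (1 / 2 : ℝ)).mul hf)
  simp only [Pi.mul_apply, ENNReal.rpow_two, mul_pow, hsq, ← mul_assoc] at h
  convert h using 3 with x
  rw [← sq, hsq]

theorem ENNReal.ofReal_sqrt (a : ℝ) : ENNReal.ofReal √a = ENNReal.ofReal a ^ (1 / 2 : ℝ) := by
  rcases le_total 0 a with ha | ha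
  · rw [Real.sqrt_eq_rpow, ENNReal.ofReal_rpow_of_nonneg ha (by norm_num)]
  · rw [Real.sqrt_eq_zero'.mpr ha, ENNReal.ofReal_of_nonpos ha, ENNReal.ofReal_zero,
      ENNReal.zero_rpow_of_pos (by norm_num)]

section WeightedCauchySchwarz

variable {X E : Type*} [MeasurableSpace X] {μ : Measure X} [NormedAddCommGroup E]
  [NormedSpace ℝ E] {g k : X → ℝ} {v : X → E} {A B : ℝ}

theorem lintegral_enorm_smul_le_sqrt_mul_sqrt (hg : AEMeasurable g μ)
    (hv : AEStronglyMeasurable v μ) (hg0 : 0 ≤ᵐ[μ] g) (hgk : g ≤ᵐ[μ] k)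
    (hA : ∫⁻ x, ENNReal.ofReal (g x) ∂μ ≤ ENNReal.ofReal A)
    (hB : ∫⁻ x, ENNReal.ofReal (k x) * ‖v x‖ₑ ^ 2 ∂μ ≤ ENNReal.ofReal B) :
    ∫⁻ x, ‖g x • v x‖ₑ ∂μ ≤ ENNReal.ofReal (√A * √B) := by
  have hgv : ∫⁻ x, ‖g x • v x‖ₑ ∂μ = ∫⁻ x, ENNReal.ofReal (g x) * ‖v x‖ₑ ∂μ :=
    lintegral_congr_ae <| hg0.mono fun x hx => by simp only [enorm_smul, Real.enorm_of_nonneg hx]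
  have hweight : ∫⁻ x, ENNReal.ofReal (g x) * ‖v x‖ₑ ^ 2 ∂μ ≤ ENNReal.ofReal B :=
    (lintegral_mono_ae <| hgk.mono fun x hx => by gcongr).trans hB
  rw [hgv, ENNReal.ofReal_mul (Real.sqrt_nonneg _), ENNReal.ofReal_sqrt, ENNReal.ofReal_sqrt]
  calc _ ≤ _ := ENNReal.lintegral_mul_le_sqrt_mul_sqrt μ hg.ennreal_ofReal hv.enorm
    _ ≤ _ := by gcongr

theorem integrable_smul_of_lintegral_le (hg : AEMeasurable g μ)
    (hv : AEStronglyMeasurable v μ) (hg0 : 0 ≤ᵐ[μ] g) (hgk : g ≤ᵐ[μ] k)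
    (hA : ∫⁻ x, ENNReal.ofReal (g x) ∂μ ≤ ENNReal.ofReal A)
    (hB : ∫⁻ x, ENNReal.ofReal (k x) * ‖v x‖ₑ ^ 2 ∂μ ≤ ENNReal.ofReal B) :
    Integrable (fun x => g x • v x) μ :=
  ⟨hg.aestronglyMeasurable.smul hv, hasFiniteIntegral_iff_enorm.mpr <|
    (lintegral_enorm_smul_le_sqrt_mul_sqrt hg hv hg0 hgk hA hB).trans_lt ENNReal.ofReal_lt_top⟩

theorem norm_integral_smul_le_sqrt_mul_sqrt (hg : AEMeasurable g μ)
    (hv : AEStronglyMeasurable v μ) (hg0 : 0 ≤ᵐ[μ] g) (hgk : g ≤ᵐ[μ] k)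
    (hA : ∫⁻ x, ENNReal.ofReal (g x) ∂μ ≤ ENNReal.ofReal A)
    (hB : ∫⁻ x, ENNReal.ofReal (k x) * ‖v x‖ₑ ^ 2 ∂μ ≤ ENNReal.ofReal B) :
    ‖∫ x, g x • v x ∂μ‖ ≤ √A * √B := by
  rw [← ENNReal.ofReal_le_ofReal_iff (by positivity), ofReal_norm]
  exact (enorm_integral_le_lintegral_enorm _).trans
    (lintegral_enorm_smul_le_sqrt_mul_sqrt hg hv hg0 hgk hA hB)

end WeightedCauchySchwarz

theorem ae_restrict_Ioc_of_forall_Ioo {p : ℝ → Prop} {a b : ℝ} (h : ∀ x ∈ Ioo a b, p x) :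
    ∀ᵐ x ∂volume.restrict (Ioc a b), p x := by
  rw [← Measure.restrict_congr_set Ioo_ae_eq_Ioc]
  exact ae_restrict_of_forall_mem measurableSet_Ioo h

section RiemannLiouvilleKernel

variable {α : ℝ} {a b c : ℝ}

theorem integrableOn_sub_rpow_Ioc (hα : 0 < α) (a b c : ℝ) :
    IntegrableOn (fun s => (c - s) ^ (α - 1)) (Ioc a b) := by
  have h := (intervalIntegral.intervalIntegrable_rpow' (r := α - 1) (by linarith)
    (a := c - a) (b := c - b)).comp_sub_left c
  simp only [sub_sub_cancel] at h
  exact h.1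

theorem integral_sub_rpow_Ioc (hα : 0 < α) (hab : a ≤ b) :
    ∫ s in Ioc a b, (c - s) ^ (α - 1) = ((c - a) ^ α - (c - b) ^ α) / α := by
  rw [← intervalIntegral.integral_of_le hab,
    intervalIntegral.integral_comp_sub_left (fun x => x ^ (α - 1)) c,
    integral_rpow (Or.inl (by linarith))]
  norm_num

theorem lintegral_sub_rpow_Ioc (hα : 0 < α) (hab : a ≤ b) :
    ∫⁻ s in Ioc a b, ENNReal.ofReal ((b - s) ^ (α - 1)) = ENNReal.ofReal ((b - a) ^ α / α) := by
  rw [← ofReal_integral_eq_lintegral_ofReal (integrableOn_sub_rpow_Ioc hα a b b)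
      (ae_restrict_of_forall_mem measurableSet_Ioc fun s hs =>
        Real.rpow_nonneg (sub_nonneg.mpr hs.2) _),
    integral_sub_rpow_Ioc hα hab, sub_self, Real.zero_rpow hα.ne', sub_zero]

theorem sub_rpow_le_sub_rpow (hα : α ≤ 1) {s : ℝ} (hsb : s < b) (hbc : b ≤ c) :
    (c - s) ^ (α - 1) ≤ (b - s) ^ (α - 1) :=
  Real.rpow_le_rpow_of_nonpos (by linarith) (by linarith) (by linarith)

-- The weight is nonnegative only on `Ioo a b`: at `s = b` it is `0 ^ (α - 1) - (c - b) ^ (α - 1)`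
-- with `0 ^ (α - 1) = 0` in Lean.
theorem lintegral_sub_rpow_sub_sub_rpow_Ioc_le (hα₀ : 0 < α) (hα₁ : α ≤ 1) (hab : a ≤ b)
    (hbc : b ≤ c) :
    ∫⁻ s in Ioc a b, ENNReal.ofReal ((b - s) ^ (α - 1) - (c - s) ^ (α - 1))
      ≤ ENNReal.ofReal ((c - b) ^ α / α) := by
  have hint : IntegrableOn (fun s => (b - s) ^ (α - 1) - (c - s) ^ (α - 1)) (Ioc a b) :=
    (integrableOn_sub_rpow_Ioc hα₀ a b b).sub (integrableOn_sub_rpow_Ioc hα₀ a b c)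
  rw [← ofReal_integral_eq_lintegral_ofReal hint
      (ae_restrict_Ioc_of_forall_Ioo fun s hs =>
        sub_nonneg.mpr (sub_rpow_le_sub_rpow hα₁ hs.2 hbc)),
    integral_sub (integrableOn_sub_rpow_Ioc hα₀ a b b) (integrableOn_sub_rpow_Ioc hα₀ a b c),
    integral_sub_rpow_Ioc hα₀ hab, integral_sub_rpow_Ioc hα₀ hab, sub_self,
    Real.zero_rpow hα₀.ne']
  gcongr ENNReal.ofReal ?_
  have : (b - a) ^ α ≤ (c - a) ^ α := Real.rpow_le_rpow (by linarith) (by linarith) hα₀.le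
  rw [div_sub_div_same, div_le_div_iff_of_pos_right hα₀]
  linarith

end RiemannLiouvilleKernel

theorem setIntegral_Ioc_sub_setIntegral_Ioc {E : Type*} [NormedAddCommGroup E] [NormedSpace ℝ E]
    {f g : ℝ → E} {a b c : ℝ} (hab : a ≤ b) (hbc : b ≤ c) (hf : IntegrableOn f (Ioc a c))
    (hg : IntegrableOn g (Ioc a b)) :
    (∫ x in Ioc a c, f x) - ∫ x in Ioc a b, g x
      = (∫ x in Ioc b c, f x) - ∫ x in Ioc a b, (g x - f x) := by
  have hfab : IntegrableOn f (Ioc a b) := hf.mono_set (Ioc_subset_Ioc_right hbc)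
  have hsplit : ∫ x in Ioc a c, f x = (∫ x in Ioc a b, f x) + ∫ x in Ioc b c, f x := by
    rw [← Ioc_union_Ioc_eq_Ioc hab hbc]
    exact setIntegral_union (Ioc_disjoint_Ioc_of_le le_rfl) measurableSet_Ioc hfab
      (hf.mono_set (Ioc_subset_Ioc_left hab))
  rw [hsplit, integral_sub hg hfab]
  abel

section Volterra

variable {E : Type*} [NormedAddCommGroup E] [NormedSpace ℝ E] {α t t₁ t₂ B : ℝ} {v : ℝ → E}

theorem integrableOn_sub_rpow_smul_Ioc (hα₀ : 0 < α) (ht : 0 ≤ t)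
    (hv : AEStronglyMeasurable v (volume.restrict (Ioc 0 t)))
    (hB : ∫⁻ s in Ioc 0 t, ENNReal.ofReal ((t - s) ^ (α - 1)) * ‖v s‖ₑ ^ 2
      ≤ ENNReal.ofReal B) :
    IntegrableOn (fun s => (t - s) ^ (α - 1) • v s) (Ioc 0 t) :=
  integrable_smul_of_lintegral_le (by fun_prop) hv
    (ae_restrict_of_forall_mem measurableSet_Ioc fun s hs =>
      Real.rpow_nonneg (sub_nonneg.mpr hs.2) _)
    Filter.EventuallyLE.rfl (lintegral_sub_rpow_Ioc hα₀ ht).le hB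

theorem norm_setIntegral_sub_rpow_smul_sub_le (hα₀ : 0 < α) (hα₁ : α ≤ 1) (h₀ : 0 ≤ t₁)
    (h₁₂ : t₁ ≤ t₂) (hv : AEStronglyMeasurable v (volume.restrict (Ioc 0 t₂)))
    (hB₁ : ∫⁻ s in Ioc 0 t₁, ENNReal.ofReal ((t₁ - s) ^ (α - 1)) * ‖v s‖ₑ ^ 2
      ≤ ENNReal.ofReal B)
    (hB₂ : ∫⁻ s in Ioc 0 t₂, ENNReal.ofReal ((t₂ - s) ^ (α - 1)) * ‖v s‖ₑ ^ 2
      ≤ ENNReal.ofReal B) :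
    ‖(∫ s in Ioc 0 t₂, (t₂ - s) ^ (α - 1) • v s) - ∫ s in Ioc 0 t₁, (t₁ - s) ^ (α - 1) • v s‖
      ≤ 2 * (√((t₂ - t₁) ^ α / α) * √B) := by
  have hv₁ : AEStronglyMeasurable v (volume.restrict (Ioc 0 t₁)) :=
    hv.mono_set (Ioc_subset_Ioc_right h₁₂)
  have hv₁₂ : AEStronglyMeasurable v (volume.restrict (Ioc t₁ t₂)) :=
    hv.mono_set (Ioc_subset_Ioc_left h₀)
  rw [setIntegral_Ioc_sub_setIntegral_Ioc h₀ h₁₂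
    (integrableOn_sub_rpow_smul_Ioc hα₀ (h₀.trans h₁₂) hv hB₂)
    (integrableOn_sub_rpow_smul_Ioc hα₀ h₀ hv₁ hB₁)]
  simp_rw [← sub_smul]
  refine (norm_sub_le _ _).trans ((add_le_add ?_ ?_).trans_eq (two_mul _).symm)
  · exact norm_integral_smul_le_sqrt_mul_sqrt (by fun_prop) hv₁₂
      (ae_restrict_of_forall_mem measurableSet_Ioc fun s hs =>
        Real.rpow_nonneg (sub_nonneg.mpr hs.2) _)
      Filter.EventuallyLE.rfl (lintegral_sub_rpow_Ioc hα₀ h₁₂).le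
      ((lintegral_mono_set (Ioc_subset_Ioc_left h₀)).trans hB₂)
  · exact norm_integral_smul_le_sqrt_mul_sqrt (by fun_prop) hv₁
      (ae_restrict_Ioc_of_forall_Ioo fun s hs =>
        sub_nonneg.mpr (sub_rpow_le_sub_rpow hα₁ hs.2 h₁₂))
      (ae_restrict_of_forall_mem measurableSet_Ioc fun s hs =>
        sub_le_self _ (Real.rpow_nonneg (by linarith [hs.2]) _))
      (lintegral_sub_rpow_sub_sub_rpow_Ioc_le hα₀ hα₁ h₀ h₁₂) hB₁

end Volterra

/-- Hölder continuity: there is `C > 0` depending only on `α` such that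
for every `T > 0`, every Banach space `𝓗`, every `w₀` and every measurable `v` with
`‖v‖_{L²_α(0,T;𝓗)} ≤ M`, the function
`w(t) = w₀ + Γ(α)⁻¹ ∫_0^t (t-s)^{α-1} v(s) ds` satisfies
`‖w(t₂) - w(t₁)‖ ≤ C |t₂ - t₁|^{α/2} M` for all `t₁, t₂ ∈ [0,T]`;
in particular `w` is `(α/2)`-Hölder continuous on `[0,T]`. -/
theorem stmt19 (α : ℝ) (hα : α ∈ Set.Ioo (0 : ℝ) 1) :
    ∃ C : ℝ, 0 < C ∧
      ∀ (T : ℝ), 0 < T →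
      ∀ (𝓗 : Type u) [NormedAddCommGroup 𝓗] [NormedSpace ℝ 𝓗] [CompleteSpace 𝓗],
      ∀ (w0 : 𝓗) (v : ℝ → 𝓗),
        AEStronglyMeasurable v (volume.restrict (Set.Ioc 0 T)) →
      ∀ (M : ℝ), 0 ≤ M →
        (∀ t ∈ Set.Icc (0 : ℝ) T,
          ∫⁻ s in Set.Ioc (0 : ℝ) t,
              ENNReal.ofReal ((t - s) ^ (α - 1)) * (‖v s‖₊ : ℝ≥0∞) ^ 2
            ≤ ENNReal.ofReal (M ^ 2)) →
      ∀ (w : ℝ → 𝓗),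
        (∀ t ∈ Set.Icc (0 : ℝ) T,
          w t = w0 + (Real.Gamma α)⁻¹ • ∫ s in Set.Ioc (0 : ℝ) t, ((t - s) ^ (α - 1)) • v s) →
      ∀ t₁ ∈ Set.Icc (0 : ℝ) T, ∀ t₂ ∈ Set.Icc (0 : ℝ) T,
        ‖w t₂ - w t₁‖ ≤ C * |t₂ - t₁| ^ (α / 2) * M := by
  obtain ⟨hα₀, hα₁⟩ := hα
  have hΓ : 0 < Real.Gamma α := Real.Gamma_pos_of_pos hα₀
  refine ⟨2 / (Real.Gamma α * √α), by positivity, ?_⟩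
  intro T _ 𝓗 _ _ _ w0 v hv M hM hB w hw t₁ ht₁ t₂ ht₂
  wlog h₁₂ : t₁ ≤ t₂ generalizing t₁ t₂
  · rw [norm_sub_rev, abs_sub_comm]
    exact this t₂ ht₂ t₁ ht₁ (le_of_not_ge h₁₂)
  have hδ : 0 ≤ t₂ - t₁ := sub_nonneg.mpr h₁₂
  have hvolterra := norm_setIntegral_sub_rpow_smul_sub_le hα₀ hα₁.le ht₁.1 h₁₂
    (hv.mono_set (Ioc_subset_Ioc_right ht₂.2)) (hB t₁ ht₁) (hB t₂ ht₂)
  have hsqrt : √((t₂ - t₁) ^ α / α) = (t₂ - t₁) ^ (α / 2) / √α := by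
    rw [Real.sqrt_div' _ hα₀.le, Real.sqrt_eq_rpow, ← Real.rpow_mul hδ, mul_one_div]
  rw [hw t₂ ht₂, hw t₁ ht₁, add_sub_add_left_eq_sub, ← smul_sub, norm_smul,
    Real.norm_of_nonneg (inv_nonneg.mpr hΓ.le), abs_of_nonneg hδ]
  calc _ ≤ (Real.Gamma α)⁻¹ * (2 * (√((t₂ - t₁) ^ α / α) * √(M ^ 2))) := by gcongr
    _ = _ := by
      rw [hsqrt, Real.sqrt_sq hM]
      field_simp
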